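/- arXiv:math/0602659 — 5 statements merged into one kernel-verified Lean document; each statement's English description precedes it below -/
import Mathlib

section
/- Let f : ℝ → ℝ be a continuously differentiable probability density such that f and f' are integrable on ℝ and f(x) → 0 as |x| → ∞, and let F(u) = ∫_{−∞}^{u} f(x) dx be its cumulative distribution function. Then for every λ ∈ ℝ and every u ∈ ℝ one has iλ · ∫_ℝ e^{iλx} f(x) (1_{x<u} − F(u)) dx = e^{iλu} f(u) − ∫_ℝ e^{iλx} f'(x) (1_{x<u} − F(u)) dx. -/
/-!
Write `h(x) = e^{iλx} f(x)`, which vanishes at `±∞` and has integrable derivative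
`h' = iλ e^{iλx} f + e^{iλx} f'`. Against the weight `1_{x<u} - c` the derivative `h'`
integrates to `h(u)`: the fundamental theorem of calculus gives `∫_{x<u} h' = h(u)` and
`∫ h' = 0`. Splitting `h'` by the product rule yields the identity.
-/

open MeasureTheory Filter Complex

section IndicatorWeight

variable {φ : ℝ → ℂ}

lemma mul_ite_lt_sub_eq_indicator_sub (φ : ℝ → ℂ) (u : ℝ) (c : ℂ) :
    (fun x => φ x * ((if x < u then 1 else 0) - c)) =
      fun x => (Set.Iio u).indicator φ x - φ x * c := by
  ext x
  by_cases hx : x < u <;> simp [hx, Set.indicator, mul_sub]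

lemma MeasureTheory.Integrable.mul_ite_lt_sub (hφ : Integrable φ) (u : ℝ) (c : ℂ) :
    Integrable fun x => φ x * ((if x < u then 1 else 0) - c) := by
  rw [mul_ite_lt_sub_eq_indicator_sub]
  exact (hφ.indicator measurableSet_Iio).sub (hφ.mul_const c)

lemma integral_mul_ite_lt_sub (hφ : Integrable φ) (u : ℝ) (c : ℂ) :
    ∫ x, φ x * ((if x < u then 1 else 0) - c) = (∫ x in Set.Iio u, φ x) - (∫ x, φ x) * c := by
  rw [mul_ite_lt_sub_eq_indicator_sub, integral_sub (hφ.indicator measurableSet_Iio)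
    (hφ.mul_const c), integral_indicator measurableSet_Iio, integral_mul_const]

lemma integral_deriv_mul_ite_lt_sub {g g' : ℝ → ℂ} (hg : ∀ x, HasDerivAt g (g' x) x)
    (hg' : Integrable g') (hbot : Tendsto g atBot (nhds 0)) (htop : Tendsto g atTop (nhds 0))
    (u : ℝ) (c : ℂ) :
    ∫ x, g' x * ((if x < u then 1 else 0) - c) = g u := by
  have hIio : ∫ x in Set.Iio u, g' x = g u := by
    rw [← integral_Iic_eq_integral_Iio,
      integral_Iic_of_hasDerivAt_of_tendsto' (fun x _ => hg x) hg'.integrableOn hbot, sub_zero]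
  rw [integral_mul_ite_lt_sub hg', hIio, integral_of_hasDerivAt_of_tendsto hg hg' hbot htop]
  simp

end IndicatorWeight

section FourierWeight

lemma norm_cexp_I_mul_ofReal_mul (l x : ℝ) (z : ℂ) : ‖cexp (I * l * x) * z‖ = ‖z‖ := by
  rw [norm_mul, mul_assoc, ← ofReal_mul, norm_exp_I_mul_ofReal, one_mul]

lemma MeasureTheory.Integrable.cexp_I_mul_ofReal_mul {g : ℝ → ℂ} (hg : Integrable g) (l : ℝ) :
    Integrable fun x : ℝ => cexp (I * l * x) * g x :=
  hg.congr' (by fun_prop) (.of_forall fun x => (norm_cexp_I_mul_ofReal_mul l x _).symm)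

lemma Filter.Tendsto.cexp_I_mul_ofReal_mul {g : ℝ → ℂ} {L : Filter ℝ} (hg : Tendsto g L (nhds 0))
    (l : ℝ) :
    Tendsto (fun x : ℝ => cexp (I * l * x) * g x) L (nhds 0) := by
  rw [tendsto_zero_iff_norm_tendsto_zero] at hg ⊢
  simpa only [norm_cexp_I_mul_ofReal_mul] using hg

lemma HasDerivAt.cexp_I_mul_ofReal_mul {g : ℝ → ℂ} {g' : ℂ} {x : ℝ} (hg : HasDerivAt g g' x)
    (l : ℝ) :
    HasDerivAt (fun x : ℝ => cexp (I * l * x) * g x)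
      (I * l * (cexp (I * l * x) * g x) + cexp (I * l * x) * g') x := by
  have hlin : HasDerivAt (fun x : ℝ => I * l * x) (I * l) x := by
    simpa using (hasDerivAt_id x).ofReal_comp.const_mul (I * l)
  exact (hlin.cexp.mul hg).congr_deriv (by ring)

end FourierWeight

theorem stmt0_general (f : ℝ → ℝ)
    (hf_smooth : ContDiff ℝ 1 f)
    (hf_int : Integrable f)
    (hf'_int : Integrable (deriv f))
    (hf_tendsto : Tendsto f (cocompact ℝ) (nhds 0))
    (F : ℝ → ℝ) :
    ∀ (l u : ℝ),
      Complex.I * (l : ℂ) *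
          ∫ x : ℝ, Complex.exp (Complex.I * l * x) * (f x : ℂ) *
            ((if x < u then (1 : ℂ) else 0) - (F u : ℂ))
        = Complex.exp (Complex.I * l * u) * (f u : ℂ) -
          ∫ x : ℝ, Complex.exp (Complex.I * l * x) * ((deriv f x : ℝ) : ℂ) *
            ((if x < u then (1 : ℂ) else 0) - (F u : ℂ)) := by
  intro l u
  have hef : Integrable fun x : ℝ => cexp (I * l * x) * (f x : ℂ) :=
    hf_int.ofReal.cexp_I_mul_ofReal_mul l
  have hef' : Integrable fun x : ℝ => cexp (I * l * x) * ((deriv f x : ℝ) : ℂ) :=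
    hf'_int.ofReal.cexp_I_mul_ofReal_mul l
  have hderiv x :=
    (hf_smooth.differentiable one_ne_zero x).hasDerivAt.ofReal_comp.cexp_I_mul_ofReal_mul l
  have hf_tendsto' : Tendsto (fun x => (f x : ℂ)) (cocompact ℝ) (nhds 0) :=
    (continuous_ofReal.tendsto' 0 0 ofReal_zero).comp hf_tendsto
  have hftc := integral_deriv_mul_ite_lt_sub hderiv ((hef.const_mul (I * l)).add hef')
    ((hf_tendsto'.mono_left atBot_le_cocompact).cexp_I_mul_ofReal_mul l)
    ((hf_tendsto'.mono_left atTop_le_cocompact).cexp_I_mul_ofReal_mul l) u (F u)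
  simp only [add_mul, mul_assoc (I * l)] at hftc
  rw [integral_add ((hef.mul_ite_lt_sub u _).const_mul _) (hef'.mul_ite_lt_sub u _),
    integral_const_mul] at hftc
  linear_combination hftc

/-- Integration-by-parts identity for the Fourier-type integral against
`f(x) (1_{x<u} - F(u))`, where `F` is the CDF of the density `f`. -/
theorem stmt0 (f : ℝ → ℝ)
    (hf_smooth : ContDiff ℝ 1 f)
    (hf_nonneg : ∀ x, 0 ≤ f x)
    (hf_int : Integrable f)
    (hf_prob : (∫ x : ℝ, f x) = 1)
    (hf'_int : Integrable (deriv f))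
    (hf_tendsto : Tendsto f (cocompact ℝ) (nhds 0))
    (F : ℝ → ℝ) (hF : ∀ u, F u = ∫ x in Set.Iio u, f x) :
    ∀ (l u : ℝ),
      Complex.I * (l : ℂ) *
          ∫ x : ℝ, Complex.exp (Complex.I * l * x) * (f x : ℂ) *
            ((if x < u then (1 : ℂ) else 0) - (F u : ℂ))
        = Complex.exp (Complex.I * l * u) * (f u : ℂ) -
          ∫ x : ℝ, Complex.exp (Complex.I * l * x) * ((deriv f x : ℝ) : ℂ) *
            ((if x < u then (1 : ℂ) else 0) - (F u : ℂ)) :=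
  stmt0_general f hf_smooth hf_int hf'_int hf_tendsto F
end

section
/- Let S : ℝ → ℝ be continuous and satisfy the drift tail condition. Then there exist constants C > 0 and γ > 0 such that G_S(x) = exp(2∫_0^x S(t) dt) satisfies G_S(x) ≤ C e^{−γ|x|} for all x ∈ ℝ; in particular, G_S is integrable on ℝ. -/
/-!
`F(x) + c|x|`, with `F(x) = ∫_0^x S`, has slope `S + c ≤ 0` on `[A, ∞)` and `S - c ≥ 0` on
`(-∞, -A]`, so it is nonincreasing on the right tail and nondecreasing on the left tail. Being
continuous on `[-A, A]`, it is therefore bounded above on all of `ℝ` by some `M`, which gives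
`G_S(x) ≤ e^{2M} e^{-2c|x|}`.
-/

open MeasureTheory Set

lemma integrable_exp_neg_mul_abs {γ : ℝ} (hγ : 0 < γ) :
    Integrable (fun x : ℝ => Real.exp (-γ * |x|)) := by
  rw [← integrableOn_univ, ← Iic_union_Ioi (a := (0 : ℝ))]
  refine IntegrableOn.union ?_ ?_
  · refine (integrableOn_exp_mul_Iic hγ 0).congr_fun (fun x hx => ?_) measurableSet_Iic
    rw [abs_of_nonpos hx, neg_mul_neg]
  · refine (integrableOn_exp_mul_Ioi (neg_neg_of_pos hγ) 0).congr_fun (fun x hx => ?_)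
      measurableSet_Ioi
    rw [abs_of_pos hx]

lemma bddAbove_range_of_monotoneOn_Iic_of_antitoneOn_Ici {φ : ℝ → ℝ} {a b : ℝ}
    (hφ : ContinuousOn φ (Icc a b)) (hmono : MonotoneOn φ (Iic a))
    (hanti : AntitoneOn φ (Ici b)) : BddAbove (range φ) := by
  obtain ⟨M, hM⟩ := isCompact_Icc.bddAbove_image hφ
  refine ⟨max M (max (φ a) (φ b)), ?_⟩
  rintro _ ⟨x, rfl⟩
  rcases le_total x a with hxa | hax
  · exact (hmono hxa self_mem_Iic hxa).trans (by simp)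
  rcases le_total b x with hbx | hxb
  · exact (hanti self_mem_Ici hbx hbx).trans (by simp)
  · exact (hM (mem_image_of_mem φ ⟨hax, hxb⟩)).trans (le_max_left _ _)

section Primitive

variable {S : ℝ → ℝ} {a c : ℝ}

lemma antitoneOn_primitive_add_mul (hS : Continuous S) (h : ∀ x ≥ a, S x ≤ -c) :
    AntitoneOn (fun x => (∫ t in (0 : ℝ)..x, S t) + c * x) (Ici a) := by
  intro x hx y _ hxy
  have hsplit : (∫ t in (0 : ℝ)..x, S t) + (∫ t in x..y, S t) = ∫ t in (0 : ℝ)..y, S t :=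
    intervalIntegral.integral_add_adjacent_intervals
      (hS.intervalIntegrable 0 x) (hS.intervalIntegrable x y)
  have hbound : ∫ t in x..y, S t ≤ ∫ _ in x..y, -c :=
    intervalIntegral.integral_mono_on hxy (hS.intervalIntegrable x y) intervalIntegrable_const
      fun t ht => h t (le_trans hx ht.1)
  rw [intervalIntegral.integral_const, smul_eq_mul] at hbound
  linarith

lemma monotoneOn_primitive_sub_mul (hS : Continuous S) (h : ∀ x ≤ a, c ≤ S x) :
    MonotoneOn (fun x => (∫ t in (0 : ℝ)..x, S t) - c * x) (Iic a) := by
  intro x _ y hy hxy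
  have hsplit : (∫ t in (0 : ℝ)..x, S t) + (∫ t in x..y, S t) = ∫ t in (0 : ℝ)..y, S t :=
    intervalIntegral.integral_add_adjacent_intervals
      (hS.intervalIntegrable 0 x) (hS.intervalIntegrable x y)
  have hbound : ∫ _ in x..y, c ≤ ∫ t in x..y, S t :=
    intervalIntegral.integral_mono_on hxy intervalIntegrable_const (hS.intervalIntegrable x y)
      fun t ht => h t (le_trans ht.2 hy)
  rw [intervalIntegral.integral_const, smul_eq_mul] at hbound
  linarith

lemma exists_primitive_le_sub_mul_abs (hS : Continuous S) {A : ℝ} (hA : 0 ≤ A)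
    (hright : ∀ x ≥ A, S x ≤ -c) (hleft : ∀ x ≤ -A, c ≤ S x) :
    ∃ M, ∀ x, (∫ t in (0 : ℝ)..x, S t) ≤ M - c * |x| := by
  have hF : Continuous fun x => ∫ t in (0 : ℝ)..x, S t :=
    intervalIntegral.continuous_primitive (fun a b => hS.intervalIntegrable a b) 0
  have hbdd : BddAbove (range fun x => (∫ t in (0 : ℝ)..x, S t) + c * |x|) := by
    refine bddAbove_range_of_monotoneOn_Iic_of_antitoneOn_Ici (a := -A) (b := A)
      (hF.add (continuous_const.mul continuous_abs)).continuousOn ?_ ?_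
    · refine (monotoneOn_primitive_sub_mul hS hleft).congr fun x hx => ?_
      simp only [abs_of_nonpos (le_trans (mem_Iic.mp hx) (neg_nonpos.mpr hA))]
      ring
    · refine (antitoneOn_primitive_add_mul hS hright).congr fun x hx => ?_
      simp only [abs_of_nonneg (le_trans hA (mem_Ici.mp hx))]
  obtain ⟨M, hM⟩ := hbdd
  exact ⟨M, fun x => le_sub_iff_add_le.mpr (hM (mem_range_self x))⟩

end Primitive

/-- Under the drift tail condition, `G_S(x) = exp(2∫_0^x S)` has exponentially small
tails and is integrable on ℝ. -/
theorem stmt4 (S : ℝ → ℝ) (hS : Continuous S)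
    (htail : ∃ A ≥ (0 : ℝ), ∃ c > (0 : ℝ),
      (∀ x ≥ A, S x ≤ -c) ∧ (∀ x ≤ -A, c ≤ S x)) :
    ∃ C > (0 : ℝ), ∃ γ > (0 : ℝ),
      (∀ x : ℝ, Real.exp (2 * ∫ t in (0:ℝ)..x, S t) ≤ C * Real.exp (-γ * |x|)) ∧
      Integrable (fun x : ℝ => Real.exp (2 * ∫ t in (0:ℝ)..x, S t)) := by
  obtain ⟨A, hA, c, hc, hright, hleft⟩ := htail
  obtain ⟨M, hM⟩ := exists_primitive_le_sub_mul_abs hS hA hright hleft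
  have hbound : ∀ x : ℝ,
      Real.exp (2 * ∫ t in (0:ℝ)..x, S t) ≤ Real.exp (2 * M) * Real.exp (-(2 * c) * |x|) := by
    intro x
    rw [← Real.exp_add, Real.exp_le_exp]
    linarith [hM x]
  have hG : Continuous fun x : ℝ => Real.exp (2 * ∫ t in (0:ℝ)..x, S t) :=
    Real.continuous_exp.comp <| continuous_const.mul <|
      intervalIntegral.continuous_primitive (fun a b => hS.intervalIntegrable a b) 0
  have hγ : (0 : ℝ) < 2 * c := by linarith
  refine ⟨Real.exp (2 * M), Real.exp_pos _, 2 * c, hγ, hbound, ?_⟩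
  refine ((integrable_exp_neg_mul_abs hγ).const_mul (Real.exp (2 * M))).mono'
    hG.aestronglyMeasurable (Filter.Eventually.of_forall fun x => ?_)
  rw [Real.norm_of_nonneg (Real.exp_pos _).le]
  exact hbound x
end

section
/- Let (Ω, 𝔉, μ) be a probability space, let L : Ω → [0, ∞) be measurable, let ν be the measure with density L with respect to μ, let Q : Ω → ℝ be measurable, and let ε > 0. Then ∫ Q² dν ≤ ε ∫ Q² dμ + (∫ Q⁴ dν)^{1/2} · (ν{ω : L(ω) > ε})^{1/2}. -/
/-!
Split `∫ Q² dν` over `{L ≤ ε}` and `{L > ε}`. On the first set `dν = L dμ ≤ ε dμ`; on the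
second, Cauchy–Schwarz for `Q²` against the indicator of the set gives
`(∫ Q⁴ dν)^{1/2} ν{L > ε}^{1/2}`.
-/

open MeasureTheory
open scoped ENNReal

namespace MeasureTheory

variable {α : Type*} [MeasurableSpace α]

theorem setLIntegral_withDensity_le_mul_lintegral {μ : Measure α} {ρ f : α → ℝ≥0∞}
    (hρ : Measurable ρ) (hf : Measurable f) {s : Set α} (hs : MeasurableSet s) {c : ℝ≥0∞}
    (hρc : ∀ x ∈ s, ρ x ≤ c) :
    ∫⁻ x in s, f x ∂μ.withDensity ρ ≤ c * ∫⁻ x, f x ∂μ :=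
  calc ∫⁻ x in s, f x ∂μ.withDensity ρ = ∫⁻ x in s, ρ x * f x ∂μ :=
        setLIntegral_withDensity_eq_setLIntegral_mul μ hρ hf hs
    _ ≤ ∫⁻ x in s, c * f x ∂μ := setLIntegral_mono' hs fun x hx => by gcongr; exact hρc x hx
    _ = c * ∫⁻ x in s, f x ∂μ := lintegral_const_mul c hf
    _ ≤ c * ∫⁻ x, f x ∂μ := by gcongr; exact Measure.restrict_le_self

theorem setLIntegral_le_lintegral_rpow_mul_measure_rpow {ν : Measure α} {f : α → ℝ≥0∞}
    (hf : AEMeasurable f ν) {s : Set α} (hs : MeasurableSet s) {p q : ℝ}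
    (hpq : p.HolderConjugate q) :
    ∫⁻ x in s, f x ∂ν ≤ (∫⁻ x, f x ^ p ∂ν) ^ (1 / p) * ν s ^ (1 / q) := by
  have hq : (0 : ℝ) < q := hpq.symm.pos
  calc ∫⁻ x in s, f x ∂ν = ∫⁻ x, (f * s.indicator (1 : α → ℝ≥0∞)) x ∂ν := by
        rw [← lintegral_indicator hs]
        congr 1 with x
        by_cases hx : x ∈ s <;> simp [hx]
    _ ≤ (∫⁻ x, f x ^ p ∂ν) ^ (1 / p) * (∫⁻ x, s.indicator 1 x ^ q ∂ν) ^ (1 / q) :=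
        ENNReal.lintegral_mul_le_Lp_mul_Lq ν hpq hf (aemeasurable_one.indicator hs)
    _ = (∫⁻ x, f x ^ p ∂ν) ^ (1 / p) * ν s ^ (1 / q) := by
        rw [← lintegral_indicator_one hs]
        congr 3 with x
        by_cases hx : x ∈ s <;> simp [hx, hq]

end MeasureTheory

theorem stmt7_general {Ω : Type*} [MeasurableSpace Ω] (μ : Measure Ω)
    (L : Ω → ℝ) (hL : Measurable L)
    (Q : Ω → ℝ) (hQ : Measurable Q) (ε : ℝ) :
    (∫⁻ ω, ENNReal.ofReal (Q ω ^ 2) ∂(μ.withDensity fun ω => ENNReal.ofReal (L ω)))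
      ≤ ENNReal.ofReal ε * (∫⁻ ω, ENNReal.ofReal (Q ω ^ 2) ∂μ)
        + (∫⁻ ω, ENNReal.ofReal (Q ω ^ 4)
              ∂(μ.withDensity fun ω => ENNReal.ofReal (L ω))) ^ ((1 : ℝ) / 2)
          * ((μ.withDensity fun ω => ENNReal.ofReal (L ω)) {ω | ε < L ω}) ^ ((1 : ℝ) / 2) := by
  have hQ2 : Measurable fun ω => ENNReal.ofReal (Q ω ^ 2) := (hQ.pow_const 2).ennreal_ofReal
  have hbig : MeasurableSet {ω | ε < L ω} := measurableSet_lt measurable_const hL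
  have hsq : ∀ ω, ENNReal.ofReal (Q ω ^ 2) ^ (2 : ℝ) = ENNReal.ofReal (Q ω ^ 4) := fun ω => by
    rw [ENNReal.rpow_two, ← ENNReal.ofReal_pow (sq_nonneg _), ← pow_mul]
  rw [← lintegral_add_compl _ hbig, add_comm]
  gcongr
  · exact setLIntegral_withDensity_le_mul_lintegral hL.ennreal_ofReal hQ2 hbig.compl
      fun ω hω => ENNReal.ofReal_le_ofReal (not_lt.mp hω)
  · simpa only [hsq] using setLIntegral_le_lintegral_rpow_mul_measure_rpow hQ2.aemeasurable
      hbig Real.HolderConjugate.two_two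

/-- Abstract change-of-measure inequality: with `ν = L ⋅ μ`,
`∫ Q² dν ≤ ε ∫ Q² dμ + (∫ Q⁴ dν)^{1/2} (ν{L > ε})^{1/2}`. -/
theorem stmt7 {Ω : Type*} [MeasurableSpace Ω] (μ : Measure Ω) [IsProbabilityMeasure μ]
    (L : Ω → ℝ) (hL : Measurable L) (hL0 : ∀ ω, 0 ≤ L ω)
    (Q : Ω → ℝ) (hQ : Measurable Q) (ε : ℝ) (hε : 0 < ε) :
    (∫⁻ ω, ENNReal.ofReal (Q ω ^ 2) ∂(μ.withDensity fun ω => ENNReal.ofReal (L ω)))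
      ≤ ENNReal.ofReal ε * (∫⁻ ω, ENNReal.ofReal (Q ω ^ 2) ∂μ)
        + (∫⁻ ω, ENNReal.ofReal (Q ω ^ 4)
              ∂(μ.withDensity fun ω => ENNReal.ofReal (L ω))) ^ ((1 : ℝ) / 2)
          * ((μ.withDensity fun ω => ENNReal.ofReal (L ω)) {ω | ε < L ω}) ^ ((1 : ℝ) / 2) :=
  stmt7_general μ L hL Q hQ ε
end

section
/- Let k ≥ 1 be an integer and let α > 0, R > 0 and T > 0. Then the supremum over all φ ∈ L²(ℝ, ℂ) with ∫_ℝ λ^{2k+2} |φ(λ)|² dλ ≤ 8πR of the quantity (1/2π)·[T ∫_ℝ λ² (1 − h_{α,k}(λ))² |φ(λ)|² dλ + 4 ∫_ℝ h_{α,k}(λ)² dλ] equals 4RTα^{2k} + 8k²/(π α (k+1)(2k+1)). -/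
/-!
Pointwise `1 - h_{α,k}(λ) = min(|αλ|^k, 1) ≤ |αλ|^k`, so `λ²(1 - h)² ≤ α^{2k} λ^{2k+2}` and the
bias term is at most `α^{2k}` times the constraint integral, i.e. at most `8πRα^{2k}`. Equality
holds wherever `|αλ| ≤ 1`, so a multiple of the indicator of `(0, 1/α]` saturating the constraint
attains the bound. The variance term `∫ h²` does not depend on `φ`; scaling reduces it to `α = 1`,
where it is `2 ∫₀¹ (1 - u^k)² du`.
-/

open MeasureTheory Set

/-- The paper's `h_{α,β}`. -/
noncomputable def taper (α β l : ℝ) : ℝ := max (1 - |α * l| ^ β) 0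

lemma one_sub_taper (α β l : ℝ) : 1 - taper α β l = min (|α * l| ^ β) 1 := by
  rw [taper, ← min_sub_sub_left, sub_sub_cancel, sub_zero]

lemma one_sub_taper_nonneg (α β l : ℝ) : 0 ≤ 1 - taper α β l := by
  rw [one_sub_taper]; positivity

lemma one_sub_taper_le (α β l : ℝ) : 1 - taper α β l ≤ |α * l| ^ β := by
  rw [one_sub_taper]; exact min_le_left _ _

lemma taper_abs (α β l : ℝ) : taper α β |l| = taper α β l := by
  simp only [taper, abs_mul, abs_abs]

lemma taper_eq_taper_one_mul (α β l : ℝ) : taper α β l = taper 1 β (α * l) := by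
  rw [taper, taper, one_mul]

section Taper

variable {α β l : ℝ}

lemma one_sub_taper_of_abs_le (hβ : 0 ≤ β) (h : |α * l| ≤ 1) :
    1 - taper α β l = |α * l| ^ β := by
  rw [one_sub_taper, min_eq_left (Real.rpow_le_one (abs_nonneg _) h hβ)]

lemma taper_of_one_le_abs (hβ : 0 ≤ β) (h : 1 ≤ |α * l|) : taper α β l = 0 :=
  max_eq_right (by linarith [Real.one_le_rpow h hβ])

lemma integral_taper_one_sq (hβ : 0 ≤ β) :
    ∫ u, taper 1 β u ^ 2 = 4 * β ^ 2 / ((β + 1) * (2 * β + 1)) := by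
  have hvanish : ∀ u ∈ Ioi (0 : ℝ) \ Ioc 0 1, taper 1 β u ^ 2 = 0 := fun u hu => by
    have h1 : 1 ≤ |1 * u| := by
      rw [one_mul, abs_of_pos hu.1]
      exact le_of_not_ge fun h => hu.2 ⟨hu.1, h⟩
    rw [taper_of_one_le_abs hβ h1, sq, mul_zero]
  have hpoly : ∀ u ∈ uIcc (0 : ℝ) 1, taper 1 β u ^ 2 = 1 - 2 * u ^ β + u ^ (2 * β) := by
    intro u hu
    rw [uIcc_of_le zero_le_one] at hu
    have hu1 : |1 * u| ≤ 1 := by rw [one_mul, abs_of_nonneg hu.1]; exact hu.2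
    have hsub := one_sub_taper_of_abs_le hβ hu1
    rw [one_mul, abs_of_nonneg hu.1] at hsub
    rw [show taper 1 β u = 1 - u ^ β by linarith, mul_comm 2 β, Real.rpow_mul hu.1, Real.rpow_two]
    ring
  have hrpow : ∀ r : ℝ, 0 ≤ r → IntervalIntegrable (fun u : ℝ => u ^ r) volume 0 1 := fun r hr =>
    intervalIntegral.intervalIntegrable_rpow' (by linarith)
  calc ∫ u, taper 1 β u ^ 2 = 2 * ∫ u in Ioi 0, taper 1 β u ^ 2 := by
        simpa only [taper_abs] using integral_comp_abs (f := fun u => taper 1 β u ^ 2)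
    _ = 2 * ∫ u in (0 : ℝ)..1, taper 1 β u ^ 2 := by
        rw [intervalIntegral.integral_of_le zero_le_one,
          setIntegral_eq_of_subset_of_forall_sdiff_eq_zero measurableSet_Ioi Ioc_subset_Ioi_self
            hvanish]
    _ = 2 * ∫ u in (0 : ℝ)..1, (1 - 2 * u ^ β + u ^ (2 * β)) := by
        rw [intervalIntegral.integral_congr hpoly]
    _ = 4 * β ^ 2 / ((β + 1) * (2 * β + 1)) := by
        rw [intervalIntegral.integral_add (intervalIntegrable_const.sub ((hrpow β hβ).const_mul 2))
            (hrpow _ (by positivity)), intervalIntegral.integral_sub intervalIntegrable_const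
            ((hrpow β hβ).const_mul 2), intervalIntegral.integral_const_mul,
          integral_rpow (Or.inl (by linarith)), integral_rpow (Or.inl (by linarith)),
          intervalIntegral.integral_const]
        simp only [Real.one_rpow, Real.zero_rpow (by positivity : β + 1 ≠ 0),
          Real.zero_rpow (by positivity : 2 * β + 1 ≠ 0)]
        field_simp
        ring

lemma integral_taper_sq (hα : 0 < α) (hβ : 0 ≤ β) :
    ∫ l, taper α β l ^ 2 = 4 * β ^ 2 / (α * (β + 1) * (2 * β + 1)) := by
  simp_rw [taper_eq_taper_one_mul α β]
  rw [Measure.integral_comp_mul_left (fun u => taper 1 β u ^ 2), integral_taper_one_sq hβ,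
    abs_inv, abs_of_pos hα, smul_eq_mul]
  field_simp

end Taper

lemma abs_mul_rpow_natCast_sq_mul_sq (k : ℕ) (α l : ℝ) :
    (|α * l| ^ (k : ℝ)) ^ 2 * l ^ 2 = α ^ (2 * k) * l ^ (2 * k + 2) := by
  rw [Real.rpow_natCast, ← pow_mul, Even.pow_abs ⟨k, by ring⟩, mul_pow]
  ring

lemma sq_mul_one_sub_taper_sq_le (k : ℕ) (α l : ℝ) :
    l ^ 2 * (1 - taper α k l) ^ 2 ≤ α ^ (2 * k) * l ^ (2 * k + 2) := by
  rw [← abs_mul_rpow_natCast_sq_mul_sq, mul_comm]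
  gcongr
  · exact one_sub_taper_nonneg α k l
  · exact one_sub_taper_le α k l

lemma sq_mul_one_sub_taper_sq_of_abs_le (k : ℕ) {α l : ℝ} (h : |α * l| ≤ 1) :
    l ^ 2 * (1 - taper α k l) ^ 2 = α ^ (2 * k) * l ^ (2 * k + 2) := by
  rw [← abs_mul_rpow_natCast_sq_mul_sq, one_sub_taper_of_abs_le (Nat.cast_nonneg k) h, mul_comm]

section Bias

variable {E : Type*} [NormedAddCommGroup E] (k : ℕ) (α : ℝ) (φ : ℝ → E)

lemma lintegral_bias_le :
    ∫⁻ l, ENNReal.ofReal (l ^ 2 * (1 - taper α k l) ^ 2 * ‖φ l‖ ^ 2)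
      ≤ ENNReal.ofReal (α ^ (2 * k)) * ∫⁻ l, ENNReal.ofReal (l ^ (2 * k + 2) * ‖φ l‖ ^ 2) := by
  rw [← lintegral_const_mul' _ _ ENNReal.ofReal_ne_top]
  refine lintegral_mono fun l => ?_
  rw [← ENNReal.ofReal_mul ((even_two_mul k).pow_nonneg α), ← mul_assoc]
  exact ENNReal.ofReal_le_ofReal
    (mul_le_mul_of_nonneg_right (sq_mul_one_sub_taper_sq_le k α l) (by positivity))

lemma lintegral_bias_of_support (hφ : ∀ l, φ l ≠ 0 → |α * l| ≤ 1) :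
    ∫⁻ l, ENNReal.ofReal (l ^ 2 * (1 - taper α k l) ^ 2 * ‖φ l‖ ^ 2)
      = ENNReal.ofReal (α ^ (2 * k)) * ∫⁻ l, ENNReal.ofReal (l ^ (2 * k + 2) * ‖φ l‖ ^ 2) := by
  rw [← lintegral_const_mul' _ _ ENNReal.ofReal_ne_top]
  refine lintegral_congr fun l => ?_
  rw [← ENNReal.ofReal_mul ((even_two_mul k).pow_nonneg α), ← mul_assoc]
  by_cases h : φ l = 0
  · simp [h]
  · rw [sq_mul_one_sub_taper_sq_of_abs_le k (hφ l h)]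

end Bias

lemma setLIntegral_Ioc_pow {b : ℝ} (hb : 0 ≤ b) (n : ℕ) :
    ∫⁻ l in Ioc 0 b, ENNReal.ofReal (l ^ n) = ENNReal.ofReal (b ^ (n + 1) / (n + 1)) := by
  rw [← ofReal_integral_eq_lintegral_ofReal (continuous_pow n).integrableOn_Ioc
      ((ae_restrict_iff' measurableSet_Ioc).2 (Filter.Eventually.of_forall
        fun l hl => pow_nonneg hl.1.le n)),
    ← intervalIntegral.integral_of_le hb, integral_pow, zero_pow n.succ_ne_zero, sub_zero]

lemma lintegral_mul_norm_indicator_const_sq {E : Type*} [NormedAddCommGroup E] {S : Set ℝ}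
    (hS : MeasurableSet S) (w : ℝ → ℝ) (c : E) :
    ∫⁻ l, ENNReal.ofReal (w l * ‖S.indicator (fun _ => c) l‖ ^ 2)
      = ENNReal.ofReal (‖c‖ ^ 2) * ∫⁻ l in S, ENNReal.ofReal (w l) := by
  rw [← lintegral_const_mul' _ _ ENNReal.ofReal_ne_top, ← lintegral_indicator hS]
  refine lintegral_congr fun l => ?_
  by_cases hl : l ∈ S
  · rw [indicator_of_mem hl, indicator_of_mem hl, ← ENNReal.ofReal_mul (by positivity), mul_comm]
  · simp [indicator_of_notMem hl]

lemma exists_supported_lintegral_pow_mul_norm_sq_eq (n : ℕ) {b M : ℝ} (hb : 0 < b)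
    (hM : 0 ≤ M) :
    ∃ φ : ℝ → ℂ, MemLp φ 2 volume ∧ (∀ l, φ l ≠ 0 → l ∈ Ioc 0 b) ∧
      ∫⁻ l, ENNReal.ofReal (l ^ n * ‖φ l‖ ^ 2) = ENNReal.ofReal M := by
  set I : ℝ := b ^ (n + 1) / (n + 1)
  have hI : 0 < I := by positivity
  refine ⟨(Ioc 0 b).indicator fun _ => (√(M / I) : ℂ),
    memLp_indicator_const 2 measurableSet_Ioc _ (Or.inr measure_Ioc_lt_top.ne),
    fun l hl => not_not.1 fun h => hl (indicator_of_notMem h _), ?_⟩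
  rw [lintegral_mul_norm_indicator_const_sq measurableSet_Ioc, setLIntegral_Ioc_pow hb.le,
    ← ENNReal.ofReal_mul (by positivity), Complex.norm_real, Real.norm_eq_abs, sq_abs,
    Real.sq_sqrt (by positivity), div_mul_cancel₀ M hI.ne']

theorem stmt15_general (k : ℕ) (α R T : ℝ) (hα : 0 < α) (hR : 0 < R) (hT : 0 < T) :
    IsGreatest
      {r : ℝ | ∃ φ : ℝ → ℂ, MemLp φ 2 (volume : Measure ℝ) ∧
        (∫⁻ l : ℝ, ENNReal.ofReal (l ^ (2 * k + 2) * ‖φ l‖ ^ 2))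
          ≤ ENNReal.ofReal (8 * Real.pi * R) ∧
        r = (1 / (2 * Real.pi)) *
          (T * (∫⁻ l : ℝ, ENNReal.ofReal
                (l ^ 2 * (1 - max (1 - |α * l| ^ (k : ℝ)) 0) ^ 2 * ‖φ l‖ ^ 2)).toReal
            + 4 * ∫ l : ℝ, (max (1 - |α * l| ^ (k : ℝ)) 0) ^ 2)}
      (4 * R * T * α ^ (2 * k) +
        8 * (k : ℝ) ^ 2 / (Real.pi * α * ((k : ℝ) + 1) * (2 * (k : ℝ) + 1))) := by
  simp only [← taper.eq_1]
  have hvalue : 1 / (2 * Real.pi) * (T * (α ^ (2 * k) * (8 * Real.pi * R))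
      + 4 * (4 * (k : ℝ) ^ 2 / (α * (k + 1) * (2 * k + 1))))
      = 4 * R * T * α ^ (2 * k) +
        8 * (k : ℝ) ^ 2 / (Real.pi * α * ((k : ℝ) + 1) * (2 * (k : ℝ) + 1)) := by
    field_simp
    ring
  rw [integral_taper_sq hα (Nat.cast_nonneg k)]
  constructor
  · obtain ⟨φ, hφL2, hsupp, hφ⟩ := exists_supported_lintegral_pow_mul_norm_sq_eq (2 * k + 2)
      (inv_pos.2 hα) (by positivity : 0 ≤ 8 * Real.pi * R)
    have hbias := lintegral_bias_of_support k α φ fun l hl => by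
      rw [abs_of_pos (mul_pos hα (hsupp l hl).1), ← mul_inv_cancel₀ hα.ne']
      exact mul_le_mul_of_nonneg_left (hsupp l hl).2 hα.le
    refine ⟨φ, hφL2, hφ.le, ?_⟩
    rw [hbias, hφ, ← ENNReal.ofReal_mul (by positivity), ENNReal.toReal_ofReal (by positivity),
      hvalue]
  · rintro r ⟨φ, -, hφ, rfl⟩
    rw [← hvalue]
    gcongr
    refine ENNReal.toReal_le_of_le_ofReal (by positivity) ((lintegral_bias_le k α φ).trans ?_)
    rw [ENNReal.ofReal_mul (by positivity)]
    gcongr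

/-- The worst case over the Sobolev-type ellipsoid `∫ λ^{2k+2}|φ(λ)|² dλ ≤ 8πR` of the
risk bound `(1/2π)[T ∫ λ²(1 - h_{α,k}(λ))²|φ(λ)|² dλ + 4 ∫ h_{α,k}(λ)² dλ]` equals
`4RTα^{2k} + 8k²/(πα(k+1)(2k+1))`, and is attained. -/
theorem stmt15 (k : ℕ) (hk : 1 ≤ k) (α R T : ℝ) (hα : 0 < α) (hR : 0 < R) (hT : 0 < T) :
    IsGreatest
      {r : ℝ | ∃ φ : ℝ → ℂ, MemLp φ 2 (volume : Measure ℝ) ∧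
        (∫⁻ l : ℝ, ENNReal.ofReal (l ^ (2 * k + 2) * ‖φ l‖ ^ 2))
          ≤ ENNReal.ofReal (8 * Real.pi * R) ∧
        r = (1 / (2 * Real.pi)) *
          (T * (∫⁻ l : ℝ, ENNReal.ofReal
                (l ^ 2 * (1 - max (1 - |α * l| ^ (k : ℝ)) 0) ^ 2 * ‖φ l‖ ^ 2)).toReal
            + 4 * ∫ l : ℝ, (max (1 - |α * l| ^ (k : ℝ)) 0) ^ 2)}
      (4 * R * T * α ^ (2 * k) +
        8 * (k : ℝ) ^ 2 / (Real.pi * α * ((k : ℝ) + 1) * (2 * (k : ℝ) + 1))) :=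
  stmt15_general k α R T hα hR hT
end

section
/- Let k ≥ 1 be an integer and let R > 0 and T > 0. Then the infimum over α > 0 of the supremum over all φ ∈ L²(ℝ, ℂ) with ∫_ℝ λ^{2k+2} |φ(λ)|² dλ ≤ 8πR of (1/2π)·[T ∫_ℝ λ² (1 − h_{α,k}(λ))² |φ(λ)|² dλ + 4 ∫_ℝ h_{α,k}(λ)² dλ] equals 4 P(k,R) T^{1/(2k+1)}. -/
/-!
For fixed `α` the risk is increasing in the bias term `∫ λ² (1 - h_{α,k}(λ))² |φ(λ)|² dλ`.
Since `(1 - h_{α,k}(λ))² ≤ |αλ|^{2k}`, with equality for `|αλ| ≤ 1`, this term is at most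
`α^{2k} · 8πR` on the ellipsoid, and a multiple of the indicator of `(0, 1/α]` attains the
bound. So the supremum is `4RT α^{2k} + B/α` with `B = (2/π) ∫ h_{1,k}²`. By Bernoulli's
inequality `t^m + m/t ≥ m + 1`, a function `A α^m + B/α` is minimised where
`m A α^{m+1} = B`, which gives Pinsker's constant.
-/

open MeasureTheory Real Set

-- `h_{α,β}` in the notation of the paper.
noncomputable def pinskerWeight (α β l : ℝ) : ℝ := max (1 - |α * l| ^ β) 0

lemma one_sub_pinskerWeight_nonneg (α β l : ℝ) : 0 ≤ 1 - pinskerWeight α β l :=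
  sub_nonneg.2 (max_le (by linarith [rpow_nonneg (abs_nonneg (α * l)) β]) zero_le_one)

lemma one_sub_pinskerWeight_le (α β l : ℝ) : 1 - pinskerWeight α β l ≤ |α * l| ^ β := by
  rw [pinskerWeight]; linarith [le_max_left (1 - |α * l| ^ β) 0]

lemma one_sub_pinskerWeight_of_abs_le_one {α β l : ℝ} (hβ : 0 ≤ β) (h : |α * l| ≤ 1) :
    1 - pinskerWeight α β l = |α * l| ^ β := by
  rw [pinskerWeight, max_eq_left (sub_nonneg.2 (rpow_le_one (abs_nonneg _) h hβ))]
  ring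

lemma integral_one_sub_rpow_sq {β : ℝ} (hβ : -1 / 2 < β) :
    ∫ u in (0 : ℝ)..1, (1 - u ^ β) ^ 2 = 2 * β ^ 2 / ((β + 1) * (2 * β + 1)) := by
  have hβ₁ : β + 1 ≠ 0 := by linarith
  have hβ₂ : 2 * β + 1 ≠ 0 := by linarith
  have hsq : EqOn (fun u : ℝ => (1 - u ^ β) ^ 2) (fun u => 1 - 2 * u ^ β + u ^ (2 * β))
      (uIcc 0 1) := fun u hu => by
    rw [uIcc_of_le zero_le_one] at hu
    dsimp only
    rw [mul_comm 2 β, rpow_mul hu.1, rpow_two]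
    ring
  have hint₁ : IntervalIntegrable (fun u : ℝ => 2 * u ^ β) volume 0 1 :=
    (intervalIntegral.intervalIntegrable_rpow' (by linarith)).const_mul 2
  have hint₂ : IntervalIntegrable (fun u : ℝ => u ^ (2 * β)) volume 0 1 :=
    intervalIntegral.intervalIntegrable_rpow' (by linarith)
  rw [intervalIntegral.integral_congr hsq,
    intervalIntegral.integral_add (intervalIntegrable_const.sub hint₁) hint₂,
    intervalIntegral.integral_sub intervalIntegrable_const hint₁,
    intervalIntegral.integral_const_mul, integral_rpow (Or.inl (by linarith)),
    integral_rpow (Or.inl (by linarith)), zero_rpow hβ₁, zero_rpow hβ₂]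
  simp only [one_rpow, intervalIntegral.integral_const, smul_eq_mul]
  field_simp
  ring

lemma integral_pinskerWeight_sq {α β : ℝ} (hα : 0 < α) (hβ : 0 < β) :
    ∫ l, pinskerWeight α β l ^ 2 = 4 * β ^ 2 / ((β + 1) * (2 * β + 1)) / α := by
  have hIoi : ∫ u in Ioi (0 : ℝ), (max (1 - u ^ β) 0) ^ 2
      = ∫ u in Ioi (0 : ℝ), (Ioc 0 1).indicator (fun u => (1 - u ^ β) ^ 2) u := by
    refine setIntegral_congr_fun measurableSet_Ioi fun u (hu : u ∈ Ioi 0) => ?_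
    rw [mem_Ioi] at hu
    by_cases h1 : u ≤ 1
    · rw [indicator_of_mem (show u ∈ Ioc 0 1 from ⟨hu, h1⟩),
        max_eq_left (sub_nonneg.2 (rpow_le_one hu.le h1 hβ.le))]
    · rw [indicator_of_notMem fun h => h1 h.2,
        max_eq_right (sub_nonpos.2 (one_le_rpow (by linarith) hβ.le))]
      norm_num
  have hcap : Ioi (0 : ℝ) ∩ Ioc 0 1 = Ioc 0 1 := inter_eq_right.2 Ioc_subset_Ioi_self
  calc ∫ l, pinskerWeight α β l ^ 2
      = α⁻¹ * ∫ u, (max (1 - |u| ^ β) 0) ^ 2 := by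
        rw [← abs_of_pos (inv_pos.2 hα), ← smul_eq_mul,
          ← Measure.integral_comp_mul_left (fun u => (max (1 - |u| ^ β) 0) ^ 2)]
        rfl
    _ = α⁻¹ * (2 * ∫ u in (0 : ℝ)..1, (1 - u ^ β) ^ 2) := by
        rw [integral_comp_abs (f := fun u => (max (1 - u ^ β) 0) ^ 2), hIoi,
          setIntegral_indicator measurableSet_Ioc, hcap,
          intervalIntegral.integral_of_le zero_le_one]
    _ = 4 * β ^ 2 / ((β + 1) * (2 * β + 1)) / α := by
        rw [integral_one_sub_rpow_sq (by linarith)]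
        ring

lemma sq_abs_rpow_natCast (x : ℝ) (k : ℕ) : (|x| ^ (k : ℝ)) ^ 2 = x ^ (2 * k) := by
  rw [rpow_natCast, ← pow_mul, mul_comm, pow_mul, sq_abs, ← pow_mul]

lemma sq_mul_one_sub_pinskerWeight_sq_le (α l : ℝ) (k : ℕ) :
    l ^ 2 * (1 - pinskerWeight α k l) ^ 2 ≤ α ^ (2 * k) * l ^ (2 * k + 2) := by
  calc l ^ 2 * (1 - pinskerWeight α k l) ^ 2 ≤ l ^ 2 * (|α * l| ^ (k : ℝ)) ^ 2 := by
        gcongr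
        exacts [one_sub_pinskerWeight_nonneg α k l, one_sub_pinskerWeight_le α k l]
    _ = α ^ (2 * k) * l ^ (2 * k + 2) := by rw [sq_abs_rpow_natCast]; ring

lemma sq_mul_one_sub_pinskerWeight_sq_of_abs_le_one {α l : ℝ} (k : ℕ) (h : |α * l| ≤ 1) :
    l ^ 2 * (1 - pinskerWeight α k l) ^ 2 = α ^ (2 * k) * l ^ (2 * k + 2) := by
  rw [one_sub_pinskerWeight_of_abs_le_one (Nat.cast_nonneg k) h, sq_abs_rpow_natCast]
  ring

lemma lintegral_sq_mul_one_sub_pinskerWeight_sq_le {E : Type*} [NormedAddCommGroup E]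
    (μ : Measure ℝ) (α : ℝ) (k : ℕ) (φ : ℝ → E) :
    ∫⁻ l, ENNReal.ofReal (l ^ 2 * (1 - pinskerWeight α k l) ^ 2 * ‖φ l‖ ^ 2) ∂μ
      ≤ ENNReal.ofReal (α ^ (2 * k)) * ∫⁻ l, ENNReal.ofReal (l ^ (2 * k + 2) * ‖φ l‖ ^ 2) ∂μ := by
  rw [← lintegral_const_mul' _ _ ENNReal.ofReal_ne_top]
  refine lintegral_mono fun l => ?_
  rw [← ENNReal.ofReal_mul ((even_two_mul k).pow_nonneg α), ← mul_assoc]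
  exact ENNReal.ofReal_le_ofReal
    (mul_le_mul_of_nonneg_right (sq_mul_one_sub_pinskerWeight_sq_le α l k) (sq_nonneg _))

lemma lintegral_pow_mul_norm_indicator_sq (n : ℕ) {a : ℝ} (ha : 0 ≤ a) (c : ℂ) :
    ∫⁻ l, ENNReal.ofReal (l ^ n * ‖(Ioc 0 a).indicator (fun _ => c) l‖ ^ 2)
      = ENNReal.ofReal (‖c‖ ^ 2 * a ^ (n + 1) / (n + 1)) := by
  have hpt : ∀ l, ENNReal.ofReal (l ^ n * ‖(Ioc 0 a).indicator (fun _ => c) l‖ ^ 2)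
      = (Ioc 0 a).indicator (fun l => ENNReal.ofReal (‖c‖ ^ 2 * l ^ n)) l := fun l => by
    by_cases hl : l ∈ Ioc 0 a
    · simp only [indicator_of_mem hl]; ring_nf
    · simp [indicator_of_notMem hl]
  simp_rw [hpt]
  rw [lintegral_indicator measurableSet_Ioc, ← ofReal_integral_eq_lintegral_ofReal
      (Continuous.integrableOn_Ioc (f := fun l => ‖c‖ ^ 2 * l ^ n) (by fun_prop))
      ((ae_restrict_iff' measurableSet_Ioc).2 (.of_forall fun l hl => by
        have : 0 < l := hl.1
        positivity)),
    ← intervalIntegral.integral_of_le ha, intervalIntegral.integral_const_mul, integral_pow]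
  rw [zero_pow (Nat.succ_ne_zero n), sub_zero, mul_div_assoc]

lemma exists_memLp_lintegral_pinskerWeight_eq {α C : ℝ} (hα : 0 < α) (hC : 0 ≤ C) (k : ℕ) :
    ∃ φ : ℝ → ℂ, MemLp φ 2 volume ∧
      ∫⁻ l, ENNReal.ofReal (l ^ (2 * k + 2) * ‖φ l‖ ^ 2) = ENNReal.ofReal C ∧
      ∫⁻ l, ENNReal.ofReal (l ^ 2 * (1 - pinskerWeight α k l) ^ 2 * ‖φ l‖ ^ 2)
        = ENNReal.ofReal (α ^ (2 * k)) * ENNReal.ofReal C := by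
  -- `c` saturates the constraint: `∫₀^{1/α} λ^{2k+2} c² dλ = C`.
  set c : ℝ := √(C * (2 * k + 3) * α ^ (2 * k + 3))
  set φ : ℝ → ℂ := (Ioc 0 α⁻¹).indicator (fun _ => (c : ℂ))
  have hconstraint : ∫⁻ l, ENNReal.ofReal (l ^ (2 * k + 2) * ‖φ l‖ ^ 2) = ENNReal.ofReal C := by
    rw [lintegral_pow_mul_norm_indicator_sq _ (inv_nonneg.2 hα.le), Complex.norm_real,
      Real.norm_eq_abs, sq_abs, sq_sqrt (by positivity)]
    congr 1
    rw [inv_pow, show 2 * k + 2 + 1 = 2 * k + 3 by ring]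
    push_cast
    field_simp
    ring
  refine ⟨φ, memLp_indicator_const 2 measurableSet_Ioc _ (.inr measure_Ioc_lt_top.ne),
    hconstraint, ?_⟩
  rw [← hconstraint, ← lintegral_const_mul' _ _ ENNReal.ofReal_ne_top]
  refine lintegral_congr fun l => ?_
  rw [← ENNReal.ofReal_mul (by positivity)]
  by_cases hl : l ∈ Ioc 0 α⁻¹
  · have hαl : |α * l| ≤ 1 := by
      rw [abs_of_pos (mul_pos hα hl.1)]
      calc α * l ≤ α * α⁻¹ := by gcongr; exact hl.2
        _ = 1 := mul_inv_cancel₀ hα.ne'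
    rw [sq_mul_one_sub_pinskerWeight_sq_of_abs_le_one k hαl]
    ring_nf
  · simp [φ, indicator_of_notMem hl]

theorem isGreatest_pinskerWeight_risk (k : ℕ) {C T α : ℝ} (hC : 0 ≤ C) (hT : 0 ≤ T) (hα : 0 < α) :
    IsGreatest {r : ℝ | ∃ φ : ℝ → ℂ, MemLp φ 2 volume ∧
        ∫⁻ l, ENNReal.ofReal (l ^ (2 * k + 2) * ‖φ l‖ ^ 2) ≤ ENNReal.ofReal C ∧
        r = 1 / (2 * π) *
          (T * (∫⁻ l, ENNReal.ofReal (l ^ 2 * (1 - pinskerWeight α k l) ^ 2 * ‖φ l‖ ^ 2)).toReal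
            + 4 * ∫ l, pinskerWeight α k l ^ 2)}
      (1 / (2 * π) * (T * (α ^ (2 * k) * C) + 4 * ∫ l, pinskerWeight α k l ^ 2)) := by
  have hα_pow : 0 ≤ α ^ (2 * k) := (even_two_mul k).pow_nonneg α
  constructor
  · obtain ⟨φ, hφ, hconstraint, hrisk⟩ := exists_memLp_lintegral_pinskerWeight_eq hα hC k
    refine ⟨φ, hφ, hconstraint.le, ?_⟩
    rw [hrisk, ← ENNReal.ofReal_mul hα_pow, ENNReal.toReal_ofReal (by positivity)]
  · rintro r ⟨φ, -, hconstraint, rfl⟩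
    have hbias : (∫⁻ l, ENNReal.ofReal (l ^ 2 * (1 - pinskerWeight α k l) ^ 2 * ‖φ l‖ ^ 2)).toReal
        ≤ α ^ (2 * k) * C := by
      refine ENNReal.toReal_le_of_le_ofReal (by positivity)
        ((lintegral_sq_mul_one_sub_pinskerWeight_sq_le volume α k φ).trans ?_)
      rw [ENNReal.ofReal_mul hα_pow]
      gcongr
    gcongr

theorem isLeast_mul_pow_add_div {A B a : ℝ} (m : ℕ) (hA : 0 ≤ A) (ha : 0 < a)
    (hB : B = m * A * a ^ (m + 1)) :
    IsLeast {v | ∃ α, 0 < α ∧ v = A * α ^ m + B / α} ((m + 1) * A * a ^ m) := by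
  refine ⟨⟨a, ha, by rw [hB]; field_simp; ring⟩, ?_⟩
  rintro v ⟨α, hα, rfl⟩
  set t := α / a with ht_def
  have ht : 0 < t := div_pos hα ha
  have hbernoulli : 1 + m * (t - 1) ≤ t ^ m := by
    simpa using one_add_mul_le_pow (a := t - 1) (by linarith) m
  have hinv : 2 - t ≤ 1 / t := by
    rw [le_div_iff₀ ht]
    nlinarith [sq_nonneg (t - 1)]
  calc (m + 1) * A * a ^ m = A * a ^ m * ((1 + m * (t - 1)) + m * (2 - t)) := by ring
    _ ≤ A * a ^ m * (t ^ m + m * (1 / t)) := by gcongr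
    _ = A * α ^ m + B / α := by
      rw [ht_def, hB, div_pow]
      field_simp
      ring

lemma mul_div_rpow_of_add_eq_one {P Q p q : ℝ} (hP : 0 < P) (hQ : 0 ≤ Q) (hpq : p + q = 1) :
    P * (Q / P) ^ q = Q ^ q * P ^ p := by
  rw [div_rpow hQ hP.le, eq_sub_of_add_eq hpq, rpow_sub hP, rpow_one]
  field_simp

theorem isLeast_mul_pow_add_div_rpow {A B : ℝ} {m : ℕ} (hm : 0 < m) (hA : 0 < A) (hB : 0 < B) :
    IsLeast {v | ∃ α, 0 < α ∧ v = A * α ^ m + B / α}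
      ((m + 1) * (B / m) ^ ((m : ℝ) / (m + 1)) * A ^ (1 / ((m : ℝ) + 1))) := by
  have hm' : (0 : ℝ) < m := by exact_mod_cast hm
  set a := (B / m / A) ^ (1 / ((m : ℝ) + 1))
  have ha_pow (n : ℕ) : a ^ n = (B / m / A) ^ ((n : ℝ) / (m + 1)) := by
    rw [← rpow_natCast, ← rpow_mul (by positivity)]
    ring_nf
  have hweights : 1 / ((m : ℝ) + 1) + m / (m + 1) = 1 := by
    rw [← add_div, div_eq_one_iff_eq (by positivity)]
    ring
  have hminimizer : B = m * A * a ^ (m + 1) := by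
    rw [ha_pow, Nat.cast_succ, div_self (by positivity), rpow_one]
    field_simp
  convert isLeast_mul_pow_add_div m hA.le (by positivity) hminimizer using 1
  rw [ha_pow, mul_assoc _ A, mul_div_rpow_of_add_eq_one hA (by positivity) hweights, mul_assoc]

/-- Pinsker-type minimax identity: the infimum over `α > 0` of the supremum over the
Sobolev-type ellipsoid `∫ λ^{2k+2}|φ(λ)|² dλ ≤ 8πR` of
`(1/2π)[T ∫ λ²(1 - h_{α,k}(λ))²|φ(λ)|² dλ + 4 ∫ h_{α,k}(λ)² dλ]` equals
`4 P(k,R) T^{1/(2k+1)}`, where `P(k,R)` is Pinsker's constant. -/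
theorem stmt16 (k : ℕ) (hk : 1 ≤ k) (R T : ℝ) (hR : 0 < R) (hT : 0 < T) :
    sInf {v : ℝ | ∃ α : ℝ, 0 < α ∧
      v = sSup {r : ℝ | ∃ φ : ℝ → ℂ, MemLp φ 2 (volume : Measure ℝ) ∧
        (∫⁻ l : ℝ, ENNReal.ofReal (l ^ (2 * k + 2) * ‖φ l‖ ^ 2))
          ≤ ENNReal.ofReal (8 * Real.pi * R) ∧
        r = (1 / (2 * Real.pi)) *
          (T * (∫⁻ l : ℝ, ENNReal.ofReal
                (l ^ 2 * (1 - max (1 - |α * l| ^ (k : ℝ)) 0) ^ 2 * ‖φ l‖ ^ 2)).toReal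
            + 4 * ∫ l : ℝ, (max (1 - |α * l| ^ (k : ℝ)) 0) ^ 2)}}
      = 4 * ((2 * (k : ℝ) + 1) *
          ((k : ℝ) / (Real.pi * ((k : ℝ) + 1) * (2 * (k : ℝ) + 1))) ^
            (2 * (k : ℝ) / (2 * (k : ℝ) + 1)) *
          R ^ ((1 : ℝ) / (2 * (k : ℝ) + 1))) *
        T ^ ((1 : ℝ) / (2 * (k : ℝ) + 1)) := by
  simp only [← pinskerWeight.eq_1]
  have hk₀ : (0 : ℝ) < k := by exact_mod_cast hk
  set X : ℝ := k / (π * (k + 1) * (2 * k + 1)) with hX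
  have hmin := isLeast_mul_pow_add_div_rpow (m := 2 * k) (A := 4 * R * T) (B := 8 * k * X)
    (by omega) (by positivity) (by positivity)
  have hfour : (4 : ℝ) ^ (2 * k / (2 * k + 1) : ℝ) * 4 ^ (1 / (2 * k + 1) : ℝ) = 4 := by
    rw [← rpow_add four_pos, ← add_div, div_self (by positivity), rpow_one]
  have hvalue : ((2 * k : ℕ) + 1) *
      (8 * k * X / (2 * k : ℕ)) ^ (((2 * k : ℕ) : ℝ) / ((2 * k : ℕ) + 1)) * (4 * R * T) ^ (1 / (((2 * k : ℕ) : ℝ) + 1))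
      = 4 * ((2 * k + 1) * X ^ (2 * k / (2 * k + 1) : ℝ) * R ^ (1 / (2 * k + 1) : ℝ)) *
        T ^ (1 / (2 * k + 1) : ℝ) := by
    rw [show 8 * k * X / (2 * k : ℕ) = 4 * X by push_cast; field_simp; ring,
      mul_rpow zero_le_four (by positivity), mul_rpow (by positivity) hT.le,
      mul_rpow zero_le_four hR.le]
    push_cast
    linear_combination ((2 * k + 1) * X ^ (2 * k / (2 * k + 1) : ℝ) * R ^ (1 / (2 * k + 1) : ℝ) *
      T ^ (1 / (2 * k + 1) : ℝ)) * hfour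
  rw [← hvalue, ← hmin.csInf_eq]
  congr 1
  ext v
  refine exists_congr fun α => and_congr_right fun hα => ?_
  rw [(isGreatest_pinskerWeight_risk k (by positivity) hT.le hα).csSup_eq,
    integral_pinskerWeight_sq hα hk₀]
  exact iff_of_eq (congrArg (v = ·) (by rw [hX]; field_simp; ring))
end
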